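/- For every integer n ≥ 3, there is no group isomorphism between the special unitary group SU(n,ℂ) and the special linear group SL(n,ℂ); that is, SU(n,ℂ) and SL(n,ℂ) are not isomorphic as abstract groups. -/

import Mathlib

/-!
Being conjugate to one's own square and having finite order are both preserved by group
isomorphisms. In `SL(n, ℂ)` the transvection `1 + E₀₁` is conjugate to its square `1 + 2 E₀₁` by
`diag(2, 1, 1/2, 1, …)`, yet has infinite order. In `SU(n)` an element `y` conjugate to its square
has a finite spectrum that avoids `0` and is stable under `z ↦ z²`, so all its eigenvalues are
roots of unity of a common order `N`; as `y` is normal, the continuous functional calculus turns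
this into `y ^ N = 1`.
-/

open Matrix

theorem Set.Finite.isOfFinOrder_of_sq_mem {G : Type*} [LeftCancelMonoid G] {S : Set G}
    (hS : S.Finite) (hsq : ∀ x ∈ S, x ^ 2 ∈ S) {x : G} (hx : x ∈ S) : IsOfFinOrder x := by
  by_contra hinf
  have hmem : ∀ k : ℕ, x ^ 2 ^ k ∈ S := by
    intro k
    induction k with
    | zero => simpa using hx
    | succ k ih => simpa only [pow_succ, pow_mul] using hsq _ ih
  have hinj : Function.Injective fun k : ℕ => x ^ 2 ^ k :=
    (injective_pow_iff_not_isOfFinOrder.mpr hinf).comp (Nat.pow_right_injective le_rfl)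
  exact Set.infinite_of_injective_forall_mem hinj hmem hS

theorem Set.Finite.exists_pow_eq_one_of_sq_mem {G₀ : Type*} [GroupWithZero G₀] {S : Set G₀}
    (hS : S.Finite) (h0 : 0 ∉ S) (hsq : ∀ z ∈ S, z ^ 2 ∈ S) :
    ∃ N : ℕ, 0 < N ∧ ∀ z ∈ S, z ^ N = 1 := by
  have hfin : ∀ z ∈ S, IsOfFinOrder z := fun z hz => by
    have hz0 : z ≠ 0 := fun h => h0 (h ▸ hz)
    rw [← Units.val_mk0 hz0, Units.isOfFinOrder_val]
    exact (hS.preimage Units.val_injective.injOn).isOfFinOrder_of_sq_mem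
      (fun v hv => by simpa using hsq _ hv) hz
  refine ⟨∏ z ∈ hS.toFinset, orderOf z,
    Finset.prod_pos fun z hz => (hfin z (hS.mem_toFinset.mp hz)).orderOf_pos, fun z hz => ?_⟩
  exact orderOf_dvd_iff_pow_eq_one.mp (Finset.dvd_prod_of_mem _ (hS.mem_toFinset.mpr hz))

theorem spectrum.sq_mem_of_isConj_sq {𝕜 A : Type*} [Field 𝕜] [Ring A] [Algebra 𝕜 A] {a : A}
    (ha : IsConj a (a ^ 2)) {z : 𝕜} (hz : z ∈ spectrum 𝕜 a) : z ^ 2 ∈ spectrum 𝕜 a := by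
  obtain ⟨u, hu⟩ := ha
  have hconj : a ^ 2 = u * a * ↑u⁻¹ := by rw [hu.eq, mul_assoc, Units.mul_inv, mul_one]
  simpa [hconj] using pow_mem_pow a 2 hz

section StarNormal

variable {A : Type*} [Ring A] [StarRing A] [Algebra ℂ A] [TopologicalSpace A]
  [ContinuousFunctionalCalculus ℂ A IsStarNormal]

theorem IsStarNormal.pow_eq_one_of_forall_mem_spectrum {a : A} [IsStarNormal a] {N : ℕ}
    (h : ∀ z ∈ spectrum ℂ a, z ^ N = 1) : a ^ N = 1 := by
  rw [← cfc_pow_id (R := ℂ) a N, ← cfc_one ℂ a]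
  exact cfc_congr h

theorem IsStarNormal.isOfFinOrder_of_isConj_sq {a : A} [IsStarNormal a] (hunit : IsUnit a)
    (hfin : (spectrum ℂ a).Finite) (hconj : IsConj a (a ^ 2)) : IsOfFinOrder a := by
  obtain ⟨N, hN, hroots⟩ := hfin.exists_pow_eq_one_of_sq_mem (spectrum.zero_notMem ℂ hunit)
    fun z hz => spectrum.sq_mem_of_isConj_sq hconj hz
  exact isOfFinOrder_iff_pow_eq_one.mpr ⟨N, hN, pow_eq_one_of_forall_mem_spectrum hroots⟩

end StarNormal

open scoped Matrix.Norms.L2Operator in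
theorem Matrix.isOfFinOrder_of_mem_unitaryGroup_of_isConj_sq {ι : Type*} [Fintype ι]
    [DecidableEq ι] {U : Matrix ι ι ℂ} (hU : U ∈ unitaryGroup ι ℂ) (hconj : IsConj U (U ^ 2)) :
    IsOfFinOrder U :=
  have : IsStarNormal U := isStarNormal_of_mem_unitary hU
  IsStarNormal.isOfFinOrder_of_isConj_sq (Unitary.isUnit_coe (U := ⟨U, hU⟩))
    (Matrix.finite_spectrum U) hconj

namespace Matrix.SpecialLinearGroup

variable {ι F : Type*} [Fintype ι] [DecidableEq ι]

theorem transvection_pow [CommRing F] {i j : ι} (hij : i ≠ j) (b : F) (N : ℕ) :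
    transvection hij b ^ N = transvection hij (N * b) := by
  induction N with
  | zero => simp
  | succ N ih => rw [pow_succ, ih, ← transvection_add]; push_cast; ring_nf

theorem diag2n_mul_transvection [Field F] {i j k : ι} (hij : i ≠ j) (hik : i ≠ k) (hjk : j ≠ k)
    (a : F) (ha : a ≠ 0) (b : F) :
    diag2n hik a ha * transvection hij b = transvection hij (a * b) * diag2n hik a ha := by
  ext r s
  simp only [coe_mul, diag2n_coe, transvection_coe, diagonal_mul, mul_diagonal, add_apply,
    single_apply, mul_add, add_mul, ite_mul, mul_ite, one_mul, mul_one, mul_zero, zero_mul]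
  by_cases hrs : i = r ∧ j = s
  · obtain ⟨rfl, rfl⟩ := hrs
    simp [hij.symm, hjk, one_apply_ne hij]
  · simp only [hrs, if_false, add_zero]
    by_cases h : r = s
    · subst h; split_ifs <;> simp
    · simp [one_apply_ne h]

theorem exists_isConj_sq_not_isOfFinOrder [Field F] [CharZero F] {i j k : ι} (hij : i ≠ j)
    (hik : i ≠ k) (hjk : j ≠ k) :
    ∃ x : SpecialLinearGroup ι F, IsConj x (x ^ 2) ∧ ¬IsOfFinOrder x := by
  refine ⟨transvection hij 1, ⟨toUnits (diag2n hik (2 : F) two_ne_zero), ?_⟩, fun hfin => ?_⟩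
  · simp [SemiconjBy, diag2n_mul_transvection hij hik hjk, transvection_pow]
  · obtain ⟨N, hN, hxN⟩ := isOfFinOrder_iff_pow_eq_one.mp hfin
    have hentry := congr_arg (fun y : SpecialLinearGroup ι F => (y : Matrix ι ι F) i j) hxN
    simp [transvection_pow, transvection_coe, one_apply_ne hij] at hentry
    omega

end Matrix.SpecialLinearGroup

/-- For every integer `n ≥ 3`, there is no group isomorphism between `SU(n, ℂ)` and
`SL(n, ℂ)`: they are not isomorphic as abstract groups. -/
theorem stmt_14 (n : ℕ) (hn : 3 ≤ n) :
    IsEmpty (Matrix.specialUnitaryGroup (Fin n) ℂ ≃* Matrix.SpecialLinearGroup (Fin n) ℂ) := by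
  refine ⟨fun φ => ?_⟩
  obtain ⟨x, hconj, hinf⟩ := SpecialLinearGroup.exists_isConj_sq_not_isOfFinOrder
    (ι := Fin n) (F := ℂ) (i := ⟨0, by omega⟩) (j := ⟨1, by omega⟩) (k := ⟨2, by omega⟩)
    (by simp) (by simp) (by simp)
  set y := φ.symm x
  have hconj_y : IsConj y (y ^ 2) := by simpa [y] using φ.symm.toMonoidHom.map_isConj hconj
  have hy : IsOfFinOrder (y : Matrix (Fin n) (Fin n) ℂ) :=
    isOfFinOrder_of_mem_unitaryGroup_of_isConj_sq (specialUnitaryGroup_le_unitaryGroup y.2)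
      (by simpa using (specialUnitaryGroup (Fin n) ℂ).subtype.map_isConj hconj_y)
  exact hinf (by simpa [y] using φ.toMonoidHom.isOfFinOrder (Submonoid.isOfFinOrder_coe.mp hy))
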